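/- Let k be a field and let t ∈ k satisfy t⁵ ≠ 1. If x : Fin 5 → k satisfies (x i)⁴ = t · ∏_{j ≠ i} (x j) for every i ∈ Fin 5, then x i = 0 for all i. -/
import Mathlib

/-- Smoothness of the fibers of the Dwork family via the Jacobian criterion: if `t⁵ ≠ 1` and
`x : Fin 5 → k` satisfies `(x i)⁴ = t * ∏_{j ≠ i} x j` for all `i`, then `x = 0`. -/
theorem dwork_family_jacobian_criterion (k : Type*) [Field k] (t : k) (ht : t ^ 5 ≠ 1)
    (x : Fin 5 → k) (hx : ∀ i : Fin 5, (x i) ^ 4 = t * ∏ j ∈ Finset.univ.erase i, x j) :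
    ∀ i, x i = 0 := by
  have h5 : ∀ i, x i ^ 5 = t * ∏ j, x j := by
    intro i
    have h : x i ^ 5 = x i * x i ^ 4 := by ring
    rw [h, hx i, ← mul_assoc, mul_comm (x i) t, mul_assoc,
      Finset.mul_prod_erase _ _ (Finset.mem_univ i)]
  have hP : (∏ j, x j) = 0 := by
    by_contra hP
    apply ht
    have key : (∏ j, x j) ^ 5 = t ^ 5 * (∏ j, x j) ^ 5 := by
      calc (∏ j, x j) ^ 5 = ∏ j, x j ^ 5 := by rw [Finset.prod_pow]
        _ = ∏ _j : Fin 5, (t * ∏ l, x l) := by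
            exact Finset.prod_congr rfl fun j _ => h5 j
        _ = t ^ 5 * (∏ j, x j) ^ 5 := by
            rw [Finset.prod_const]; simp [mul_pow]
    have := mul_right_cancel₀ (pow_ne_zero 5 hP) (by linear_combination -key :
      t ^ 5 * (∏ j, x j) ^ 5 = 1 * (∏ j, x j) ^ 5)
    simpa using this
  intro i
  have : x i ^ 5 = 0 := by rw [h5 i, hP, mul_zero]
  exact pow_eq_zero_iff (by norm_num) |>.mp this
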